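/- arXiv:1801.09849 — 8 statements merged into one kernel-verified Lean document; each statement's English description precedes it below -/
import Mathlib

section
/- Let $K \subseteq \mathbb{R}^n$ be a proper cone that is self-dual, i.e. $K = K^* := \{y \in \mathbb{R}^n : \langle y, x \rangle \ge 0 \text{ for all } x \in K\}$, and let $A$ be a real $n \times n$ matrix. If for every $K$-semipositive matrix $B$ the matrix $A + B$ is $K$-semipositive, then $A$ is $K$-nonnegative, i.e. $A(K) \subseteq K$. -/
open Matrix Set

/-- A proper cone in `ℝ^n`: a convex cone that is closed, pointed and has
nonempty interior. -/
def IsProperCone {n : ℕ} (K : Set (Fin n → ℝ)) : Prop :=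
  (∀ x ∈ K, ∀ y ∈ K, x + y ∈ K) ∧
  (∀ a : ℝ, 0 ≤ a → ∀ x ∈ K, a • x ∈ K) ∧
  IsClosed K ∧
  K ∩ (-K) = {(0 : Fin n → ℝ)} ∧
  (interior K).Nonempty

/-- The dual cone with respect to the Euclidean inner product. -/
def dualCone {n : ℕ} (K : Set (Fin n → ℝ)) : Set (Fin n → ℝ) :=
  {y | ∀ x ∈ K, 0 ≤ ∑ i, y i * x i}

/-- `A` is `K`-semipositive. -/
def Semipositive {n : ℕ} (K : Set (Fin n → ℝ)) (A : Matrix (Fin n) (Fin n) ℝ) : Prop :=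
  ∃ x ∈ interior K, A.mulVec x ∈ interior K

private lemma small_perturb (s c : ℝ) (hs : s < 0) : ∃ η : ℝ, 0 < η ∧ s + η * c < 0 := by
  refine ⟨(-s) / (2 * (|c| + 1)), div_pos (neg_pos.mpr hs) (by positivity), ?_⟩
  have h1 : (0:ℝ) < |c| + 1 := by positivity
  have h2 : c ≤ |c| := le_abs_self c
  have hηpos : (0:ℝ) < (-s) / (2 * (|c| + 1)) := div_pos (neg_pos.mpr hs) (by positivity)
  have key : (-s) / (2 * (|c| + 1)) * (|c| + 1) = -s / 2 := by
    field_simp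
  nlinarith [mul_le_mul_of_nonneg_left h2 hηpos.le]

theorem stmt_2 {n : ℕ} (K : Set (Fin n → ℝ))
    (hK : IsProperCone K) (hself : K = dualCone K)
    (A : Matrix (Fin n) (Fin n) ℝ)
    (hA : ∀ B : Matrix (Fin n) (Fin n) ℝ, Semipositive K B → Semipositive K (A + B)) :
    ∀ x ∈ K, A.mulVec x ∈ K := by
  obtain ⟨hadd, hsmul, hclosed, hpointed, e, he⟩ := hK
  have hsmul_int : ∀ a : ℝ, 0 < a → ∀ y ∈ interior K, a • y ∈ interior K := by
    intro a ha y hy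
    have hsub : (fun v : Fin n → ℝ => a • v) '' interior K ⊆ K := by
      rintro _ ⟨v, hv, rfl⟩
      exact hsmul a ha.le v (interior_subset hv)
    have hopen : IsOpen ((fun v : Fin n → ℝ => a • v) '' interior K) :=
      (isOpenMap_smul₀ (ne_of_gt ha)) _ isOpen_interior
    exact interior_maximal hsub hopen ⟨y, hy, rfl⟩
  have hadd_int : ∀ x ∈ K, ∀ y ∈ interior K, x + y ∈ interior K := by
    intro x hx y hy
    have hsub : (fun v : Fin n → ℝ => x + v) '' interior K ⊆ K := by
      rintro _ ⟨v, hv, rfl⟩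
      exact hadd x hx v (interior_subset hv)
    have hopen : IsOpen ((fun v : Fin n → ℝ => x + v) '' interior K) :=
      (isOpenMap_add_left x) _ isOpen_interior
    exact interior_maximal hsub hopen ⟨y, hy, rfl⟩
  intro x hx
  by_contra hAx
  rw [hself] at hAx
  simp only [dualCone, mem_setOf_eq] at hAx
  push_neg at hAx
  obtain ⟨z, hzK, hz⟩ := hAx
  -- hz : ∑ i, A.mulVec x i * z i < 0
  obtain ⟨η, hη, hηs⟩ := small_perturb _ (∑ i, (A.mulVec e) i * z i) hz
  set x₀ : Fin n → ℝ := x + η • e with hx₀def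
  have hx₀int : x₀ ∈ interior K := hadd_int x hx _ (hsmul_int η hη e he)
  have hx₀s : ∑ i, (A.mulVec x₀) i * z i < 0 := by
    have hlin : A.mulVec x₀ = A.mulVec x + η • A.mulVec e := by
      rw [hx₀def, Matrix.mulVec_add, Matrix.mulVec_smul]
    calc ∑ i, (A.mulVec x₀) i * z i
        = ∑ i, ((A.mulVec x) i * z i + η * ((A.mulVec e) i * z i)) := by
          rw [hlin]
          exact Finset.sum_congr rfl fun i _ => by
            simp only [Pi.add_apply, Pi.smul_apply, smul_eq_mul]; ring
      _ = (∑ i, (A.mulVec x) i * z i) + η * ∑ i, (A.mulVec e) i * z i := by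
          rw [Finset.sum_add_distrib, Finset.mul_sum]
      _ < 0 := hηs
  have hx₀ne : x₀ ≠ 0 := by
    intro h
    rw [h] at hx₀s
    simp [Matrix.mulVec_zero] at hx₀s
  set c0 : ℝ := ∑ k, x₀ k * x₀ k with hc0def
  have hc0 : 0 < c0 := by
    obtain ⟨k, hk⟩ := Function.ne_iff.mp hx₀ne
    exact Finset.sum_pos' (fun i _ => mul_self_nonneg _)
      ⟨k, Finset.mem_univ k, mul_self_pos.mpr (by simpa using hk)⟩
  obtain ⟨ε, hε, hεs⟩ := small_perturb _ (∑ i, e i * z i) hx₀s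
  set σ : Fin n → ℝ := A.mulVec x₀ + ε • e with hσdef
  have hσz : ∑ i, σ i * z i < 0 := by
    calc ∑ i, σ i * z i
        = ∑ i, ((A.mulVec x₀) i * z i + ε * (e i * z i)) := by
          exact Finset.sum_congr rfl fun i _ => by
            simp only [hσdef, Pi.add_apply, Pi.smul_apply, smul_eq_mul]; ring
      _ = (∑ i, (A.mulVec x₀) i * z i) + ε * ∑ i, e i * z i := by
          rw [Finset.sum_add_distrib, Finset.mul_sum]
      _ < 0 := hεs
  set S : Matrix (Fin n) (Fin n) ℝ := Matrix.of fun i j => σ i * x₀ j * c0⁻¹ with hSdef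
  have hSmul : ∀ w : Fin n → ℝ, S.mulVec w = ((∑ j, x₀ j * w j) * c0⁻¹) • σ := by
    intro w
    funext i
    simp only [hSdef, Matrix.mulVec, dotProduct, Matrix.of_apply, Pi.smul_apply,
      smul_eq_mul, Finset.sum_mul]
    exact Finset.sum_congr rfl fun j _ => by ring
  have hBsemi : Semipositive K (S - A) := by
    refine ⟨x₀, hx₀int, ?_⟩
    have hB : (S - A).mulVec x₀ = ε • e := by
      rw [Matrix.sub_mulVec, hSmul, ← hc0def, mul_inv_cancel₀ hc0.ne', one_smul, hσdef,
        add_sub_cancel_left]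
    rw [hB]
    exact hsmul_int ε hε e he
  have hSsemi : Semipositive K S := by
    have h := hA (S - A) hBsemi
    rwa [show A + (S - A) = S from by abel] at h
  obtain ⟨w, hwint, hSw⟩ := hSsemi
  rw [hSmul] at hSw
  set t : ℝ := (∑ j, x₀ j * w j) * c0⁻¹ with htdef
  have ht0 : 0 ≤ t := by
    have hx₀dual : x₀ ∈ dualCone K := hself ▸ interior_subset hx₀int
    have h1 : 0 ≤ ∑ j, x₀ j * w j := hx₀dual w (interior_subset hwint)
    exact mul_nonneg h1 (inv_nonneg.mpr hc0.le)
  have hzdual : z ∈ dualCone K := hself ▸ hzK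
  have h2 : 0 ≤ ∑ i, z i * (t • σ) i := hzdual _ (interior_subset hSw)
  have h3 : ∑ i, z i * (t • σ) i = t * ∑ i, σ i * z i := by
    rw [Finset.mul_sum]
    exact Finset.sum_congr rfl fun i _ => by
      simp only [Pi.smul_apply, smul_eq_mul]; ring
  have h4 : 0 ≤ t * ∑ i, σ i * z i := h3 ▸ h2
  have ht : t = 0 := by
    by_contra hne
    have htpos : 0 < t := lt_of_le_of_ne ht0 (Ne.symm hne)
    exact absurd h4 (not_le.mpr (mul_neg_of_pos_of_neg htpos hσz))
  rw [ht, zero_smul] at hSw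
  obtain ⟨r, hr, hball⟩ := Metric.mem_nhds_iff.mp (mem_interior_iff_mem_nhds.mp hSw)
  have hx₀norm : 0 < ‖x₀‖ := norm_pos_iff.mpr hx₀ne
  set δ : ℝ := r / (2 * ‖x₀‖) with hδdef
  have hδ : 0 < δ := by positivity
  have hnorm : ‖δ • x₀‖ < r := by
    rw [norm_smul, Real.norm_eq_abs, abs_of_pos hδ]
    have : δ * ‖x₀‖ = r / 2 := by
      rw [hδdef]; field_simp
    rw [this]; linarith
  have h5 : δ • x₀ ∈ K := hball (mem_ball_zero_iff.mpr hnorm)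
  have h6 : -(δ • x₀) ∈ K := hball (mem_ball_zero_iff.mpr (by rwa [norm_neg]))
  have h7 : δ • x₀ ∈ K ∩ (-K) := ⟨h5, by simpa [Set.mem_neg] using h6⟩
  rw [hpointed, mem_singleton_iff] at h7
  exact hx₀ne ((smul_eq_zero.mp h7).resolve_left hδ.ne')
end

section
/- Let $K$ and $K_1$ be proper cones in $\mathbb{R}^n$ and let $T$ be an invertible real $n \times n$ matrix with $T(K) = K_1$. Then the set of $K$-nonnegative matrices equals $T^{-1} \pi(K_1) T$, i.e. a real $n \times n$ matrix $A$ satisfies $A(K) \subseteq K$ if and only if $T A T^{-1}$ satisfies $(T A T^{-1})(K_1) \subseteq K_1$; consequently $T A T^{-1}$ is $K_1$-nonnegative if and only if for every $K$-semipositive matrix $B$ the matrix $A + B$ is $K$-semipositive. -/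
/-!
If `A` maps some `x₀ ∈ K` outside `K`, a functional `f ≥ 0` on `K` separates `A x₀` from `K`,
and since `K` lies in the closure of its interior, some `x₁ ∈ interior K` still has
`f (A x₁) < 0`. With `z = x₁ / f x₁`, the rank-one matrix `B y = -f (A y) • z` sends `x₁` to a
positive multiple of `z ∈ interior K`, so it is semipositive, yet `f ∘ (A + B) = 0` while `f > 0`
on `interior K`, so `A + B` is not. The similarity part is the change of variables `x ↦ T x`.
-/

open Matrix Set

def IsProperCone.toProperCone {n : ℕ} {K : Set (Fin n → ℝ)} (hK : IsProperCone K) :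
    ProperCone ℝ (Fin n → ℝ) where
  carrier := K
  add_mem' hx hy := hK.1 _ hx _ hy
  zero_mem' := by
    obtain ⟨x, hx⟩ := hK.2.2.2.2
    simpa using hK.2.1 0 le_rfl x (interior_subset hx)
  smul_mem' c _ hx := hK.2.1 c c.2 _ hx
  isClosed' := hK.2.2.1

@[simp]
lemma IsProperCone.coe_toProperCone {n : ℕ} {K : Set (Fin n → ℝ)} (hK : IsProperCone K) :
    (hK.toProperCone : Set (Fin n → ℝ)) = K :=
  rfl

namespace PointedCone

variable {E : Type*} [AddCommGroup E] [TopologicalSpace E] [Module ℝ E] (C : PointedCone ℝ E)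

lemma add_mem_interior [ContinuousAdd E] {x y : E} (hx : x ∈ C) (hy : y ∈ interior (C : Set E)) :
    x + y ∈ interior (C : Set E) :=
  (Homeomorph.addLeft x).isOpenMap.mapsTo_interior (fun _ hz => C.add_mem hx hz) hy

lemma smul_mem_interior [ContinuousConstSMul ℝ E] {c : ℝ} (hc : 0 < c) {y : E}
    (hy : y ∈ interior (C : Set E)) : c • y ∈ interior (C : Set E) :=
  (Homeomorph.smulOfNeZero c hc.ne').isOpenMap.mapsTo_interior
    (fun _ hz => C.smul_mem hc.le hz) hy

end PointedCone

lemma ContinuousLinearMap.pos_of_mem_interior {E : Type*} [AddCommGroup E] [TopologicalSpace E]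
    [ContinuousAdd E] [Module ℝ E] [ContinuousSMul ℝ E] {f : StrongDual ℝ E} (hf : f ≠ 0)
    {s : Set E} (hs : ∀ x ∈ s, 0 ≤ f x) {y : E} (hy : y ∈ interior s) : 0 < f y := by
  have : f y ∈ interior (Ici 0) := (f.isOpenMap_of_ne_zero hf).mapsTo_interior hs hy
  rwa [interior_Ici] at this

section Semipositive

variable {n : ℕ} (C : PointedCone ℝ (Fin n → ℝ))

lemma Semipositive.add_of_mapsTo {A B : Matrix (Fin n) (Fin n) ℝ} (hA : MapsTo A.mulVec C C)
    (hB : Semipositive C B) : Semipositive C (A + B) := by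
  obtain ⟨x, hx, hBx⟩ := hB
  exact ⟨x, hx, by rw [add_mulVec]; exact C.add_mem_interior (hA (interior_subset hx)) hBx⟩

lemma exists_semipositive_not_semipositive_add {f : StrongDual ℝ (Fin n → ℝ)}
    (hfC : ∀ x ∈ C, 0 ≤ f x) {A : Matrix (Fin n) (Fin n) ℝ} {x₁ : Fin n → ℝ}
    (hx₁ : x₁ ∈ interior (C : Set (Fin n → ℝ))) (hAx₁ : f (A *ᵥ x₁) < 0) :
    ∃ B, Semipositive C B ∧ ¬ Semipositive C (A + B) := by
  have hf : f ≠ 0 := by rintro rfl; simp at hAx₁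
  have hfx₁ : 0 < f x₁ := f.pos_of_mem_interior hf hfC hx₁
  set z := (f x₁)⁻¹ • x₁
  set B := LinearMap.toMatrix' ((-(f.toLinearMap ∘ₗ A.mulVecLin)).smulRight z)
  have hB : ∀ y, B *ᵥ y = -f (A *ᵥ y) • z := fun y => by simp [B]
  refine ⟨B, ⟨x₁, hx₁, ?_⟩, ?_⟩
  · rw [hB]
    exact C.smul_mem_interior (neg_pos.2 hAx₁) (C.smul_mem_interior (inv_pos.2 hfx₁) hx₁)
  · rintro ⟨y, -, hy⟩
    have : f ((A + B) *ᵥ y) = 0 := by simp [add_mulVec, hB, z, hfx₁.ne']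
    exact (f.pos_of_mem_interior hf hfC hy).ne' this

end Semipositive

theorem ProperCone.mapsTo_iff_forall_semipositive_add {n : ℕ} (C : ProperCone ℝ (Fin n → ℝ))
    (hC : (interior (C : Set (Fin n → ℝ))).Nonempty) (A : Matrix (Fin n) (Fin n) ℝ) :
    MapsTo A.mulVec C C ↔ ∀ B, Semipositive C B → Semipositive C (A + B) := by
  refine ⟨fun hA B hB => hB.add_of_mapsTo C.toPointedCone hA,
    fun h x₀ hx₀ => by_contra fun hAx₀ => ?_⟩
  obtain ⟨f, hfC, hfx₀⟩ := C.hyperplane_separation_point hAx₀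
  have : x₀ ∈ closure (interior (C : Set (Fin n → ℝ))) := by
    rw [C.convex.closure_interior_eq_closure_of_nonempty_interior hC]
    exact subset_closure hx₀
  obtain ⟨x₁, hfx₁, hx₁⟩ :=
    mem_closure_iff.1 this {x | f (A *ᵥ x) < 0} (isOpen_lt (by fun_prop) continuous_const) hfx₀
  obtain ⟨B, hB, hAB⟩ := exists_semipositive_not_semipositive_add C hfC hx₁ hfx₁
  exact hAB (h B hB)

theorem Matrix.mapsTo_conj_image_iff {m R : Type*} [Fintype m] [DecidableEq m] [CommRing R]
    {T : Matrix m m R} (hT : IsUnit T.det) (K : Set (m → R)) (A : Matrix m m R) :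
    MapsTo (T * A * T⁻¹).mulVec (T.mulVec '' K) (T.mulVec '' K) ↔ MapsTo A.mulVec K K := by
  have hinj := mulVec_injective_of_isUnit ((isUnit_iff_isUnit_det T).2 hT)
  have hconj : ∀ y, (T * A * T⁻¹) *ᵥ (T *ᵥ y) = T *ᵥ (A *ᵥ y) := by
    simp [mulVec_mulVec, Matrix.mul_assoc, nonsing_inv_mul _ hT]
  simp only [MapsTo, forall_mem_image, hconj, hinj.mem_set_image]

theorem stmt_4_general {n : ℕ} (K K₁ : Set (Fin n → ℝ))
    (hK : IsProperCone K)
    (T : Matrix (Fin n) (Fin n) ℝ) (hT : IsUnit T.det)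
    (hTK : T.mulVec '' K = K₁)
    (A : Matrix (Fin n) (Fin n) ℝ) :
    ((∀ x ∈ K, A.mulVec x ∈ K) ↔ (∀ x ∈ K₁, (T * A * T⁻¹).mulVec x ∈ K₁)) ∧
    ((∀ x ∈ K₁, (T * A * T⁻¹).mulVec x ∈ K₁) ↔
      (∀ B : Matrix (Fin n) (Fin n) ℝ, Semipositive K B → Semipositive K (A + B))) := by
  subst hTK
  have hconj := mapsTo_conj_image_iff hT K A
  have hkey := hK.toProperCone.mapsTo_iff_forall_semipositive_add hK.2.2.2.2 A
  rw [hK.coe_toProperCone] at hkey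
  exact ⟨hconj.symm, hconj.trans hkey⟩

theorem stmt_4 {n : ℕ} (K K₁ : Set (Fin n → ℝ))
    (hK : IsProperCone K) (hK₁ : IsProperCone K₁)
    (T : Matrix (Fin n) (Fin n) ℝ) (hT : IsUnit T.det)
    (hTK : T.mulVec '' K = K₁)
    (A : Matrix (Fin n) (Fin n) ℝ) :
    ((∀ x ∈ K, A.mulVec x ∈ K) ↔ (∀ x ∈ K₁, (T * A * T⁻¹).mulVec x ∈ K₁)) ∧
    ((∀ x ∈ K₁, (T * A * T⁻¹).mulVec x ∈ K₁) ↔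
      (∀ B : Matrix (Fin n) (Fin n) ℝ, Semipositive K B → Semipositive K (A + B))) :=
  stmt_4_general K K₁ hK T hT hTK A
end

section
/- Let $K_1 \subseteq \mathbb{R}^n$ and $K_2 \subseteq \mathbb{R}^m$ be proper cones and let $A$ be a real $m \times n$ matrix. Then exactly one of the following holds: (1) there exists $x \in K_1$ such that $Ax$ lies in the interior of $K_2$; (2) there exists a nonzero $y \in K_2^*$ such that $-A^t y \in K_1^*$. -/
open Matrix Set

/-!
Both alternatives at once are impossible: a nonzero `y ∈ K₂*` is strictly positive on
`interior K₂` (for `z` there, `z - δ y ∈ K₂` for small `δ > 0`), so `⟨y, A x⟩ > 0`,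
while `-Aᵀ y ∈ K₁*` says `⟨y, A x⟩ = ⟨Aᵀ y, x⟩ ≤ 0`.
If the first alternative fails, the convex cone `A K₁` misses the open convex set
`interior K₂`, and Hahn–Banach separates them by a nonzero functional `f`. Since `A K₁` is a
cone containing `0`, the separating level can be taken to be `0`, so `f ≥ 0` on `A K₁` and
`f ≤ 0` on `K₂`; the vector `y = -f` is then the second alternative.
-/

namespace IsProperCone

variable {n : ℕ} {K : Set (Fin n → ℝ)}

theorem smul_mem (hK : IsProperCone K) {a : ℝ} (ha : 0 ≤ a) {x : Fin n → ℝ} (hx : x ∈ K) :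
    a • x ∈ K :=
  hK.2.1 a ha x hx

theorem convex (hK : IsProperCone K) : Convex ℝ K := fun _ hx _ hy _ _ ha hb _ =>
  hK.1 _ (hK.smul_mem ha hx) _ (hK.smul_mem hb hy)

theorem interior_nonempty (hK : IsProperCone K) : (interior K).Nonempty :=
  hK.2.2.2.2

theorem zero_mem (hK : IsProperCone K) : (0 : Fin n → ℝ) ∈ K := by
  have h : (0 : Fin n → ℝ) ∈ K ∩ -K := hK.2.2.2.1.symm ▸ rfl
  exact h.1

end IsProperCone

theorem mem_dualCone_iff {n : ℕ} {K : Set (Fin n → ℝ)} {y : Fin n → ℝ} :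
    y ∈ dualCone K ↔ ∀ x ∈ K, 0 ≤ y ⬝ᵥ x :=
  Iff.rfl

theorem ContinuousLinearMap.apply_eq_dotProduct {n : ℕ} (f : (Fin n → ℝ) →L[ℝ] ℝ)
    (z : Fin n → ℝ) : f z = (fun i => f (Pi.single i 1)) ⬝ᵥ z := by
  rw [← f.coe_coe, LinearMap.pi_apply_eq_sum_univ f.toLinearMap z]
  refine Finset.sum_congr rfl fun i _ => ?_
  rw [smul_eq_mul, mul_comm]
  congr 2
  ext j
  simp [Pi.single_apply, eq_comm]

theorem dotProduct_pos_of_mem_interior {n : ℕ} {K : Set (Fin n → ℝ)} {y z : Fin n → ℝ}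
    (hy : y ∈ dualCone K) (hy0 : y ≠ 0) (hz : z ∈ interior K) : 0 < y ⬝ᵥ z := by
  have hnear : ∀ᶠ δ : ℝ in nhdsWithin 0 (Ioi 0), z - δ • y ∈ K := by
    have : Filter.Tendsto (fun δ : ℝ => z - δ • y) (nhds 0) (nhds z) :=
      (continuous_const.sub (continuous_id.smul continuous_const)).tendsto' 0 z (by simp)
    exact (this.eventually (mem_interior_iff_mem_nhds.1 hz)).filter_mono nhdsWithin_le_nhds
  obtain ⟨δ, hδK, hδ⟩ := (hnear.and self_mem_nhdsWithin).exists
  have hyy : 0 < y ⬝ᵥ y := by simpa using dotProduct_star_self_pos_iff.2 hy0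
  have hdual := mem_dualCone_iff.1 hy _ hδK
  rw [dotProduct_sub, dotProduct_smul, smul_eq_mul] at hdual
  nlinarith [mul_pos (show (0:ℝ) < δ from hδ) hyy]

theorem neg_transpose_mulVec_notMem_dualCone {n m : ℕ}
    {K₁ : Set (Fin n → ℝ)} {K₂ : Set (Fin m → ℝ)} {A : Matrix (Fin m) (Fin n) ℝ}
    {x : Fin n → ℝ} {y : Fin m → ℝ} (hx : x ∈ K₁) (hAx : A *ᵥ x ∈ interior K₂)
    (hy : y ∈ dualCone K₂) (hy0 : y ≠ 0) : -(Aᵀ *ᵥ y) ∉ dualCone K₁ := by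
  intro hAy
  have hle := mem_dualCone_iff.1 hAy x hx
  rw [neg_dotProduct, mulVec_transpose, ← dotProduct_mulVec] at hle
  linarith [dotProduct_pos_of_mem_interior hy hy0 hAx]

theorem exists_strongDual_separating_cone {E : Type*} [AddCommGroup E] [Module ℝ E]
    [TopologicalSpace E] [IsTopologicalAddGroup E] [ContinuousSMul ℝ E] {K C : Set E}
    (hK : Convex ℝ K) (hKi : (interior K).Nonempty) (hC : Convex ℝ C) (hC0 : (0 : E) ∈ C)
    (hCsmul : ∀ t : ℝ, 0 ≤ t → ∀ c ∈ C, t • c ∈ C) (hKC : Disjoint (interior K) C) :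
    ∃ f : StrongDual ℝ E, f ≠ 0 ∧ (∀ k ∈ K, f k ≤ 0) ∧ ∀ c ∈ C, 0 ≤ f c := by
  obtain ⟨f, u, hf0, hfK, hfC⟩ :=
    geometric_hahn_banach_of_nonempty_interior hK hC hKC hKi ⟨0, hC0⟩
  have hu : u ≤ 0 := by simpa using hfC 0 hC0
  refine ⟨f, hf0, fun k hk => (hfK k hk).trans hu, fun c hc => ?_⟩
  by_contra! hfc
  -- scaling `c` by `(u - 1) / f c ≥ 0` would push `f` below `u` on `C`
  have := hfC _ (hCsmul ((u - 1) / f c) (div_nonneg_of_nonpos (by linarith) hfc.le) c hc)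
  rw [map_smul, smul_eq_mul, div_mul_cancel₀ _ hfc.ne] at this
  linarith

theorem exists_mem_dualCone_of_forall_mulVec_notMem_interior {n m : ℕ}
    {K₁ : Set (Fin n → ℝ)} {K₂ : Set (Fin m → ℝ)} {A : Matrix (Fin m) (Fin n) ℝ}
    (hK₁ : Convex ℝ K₁) (h0K₁ : 0 ∈ K₁) (hsmulK₁ : ∀ t : ℝ, 0 ≤ t → ∀ x ∈ K₁, t • x ∈ K₁)
    (hK₂ : Convex ℝ K₂) (hK₂i : (interior K₂).Nonempty)
    (hA : ∀ x ∈ K₁, A *ᵥ x ∉ interior K₂) :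
    ∃ y ∈ dualCone K₂, y ≠ 0 ∧ -(Aᵀ *ᵥ y) ∈ dualCone K₁ := by
  have hdisj : Disjoint (interior K₂) (A.mulVec '' K₁) := by
    rw [Set.disjoint_left]
    rintro _ hAx ⟨x, hx, rfl⟩
    exact hA x hx hAx
  obtain ⟨f, hf0, hfK₂, hfA⟩ := exists_strongDual_separating_cone hK₂ hK₂i
    (hK₁.linear_image A.mulVecLin) ⟨0, h0K₁, mulVec_zero A⟩
    (by
      rintro t ht _ ⟨x, hx, rfl⟩
      exact ⟨t • x, hsmulK₁ t ht x hx, mulVec_smul A t x⟩)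
    hdisj
  set w : Fin m → ℝ := fun j => f (Pi.single j 1)
  have hfw : ∀ z, f z = w ⬝ᵥ z := f.apply_eq_dotProduct
  refine ⟨-w, mem_dualCone_iff.2 fun k hk => ?_, fun hw => hf0 ?_,
    mem_dualCone_iff.2 fun x hx => ?_⟩
  · rw [neg_dotProduct, ← hfw]
    exact neg_nonneg.2 (hfK₂ k hk)
  · ext z
    rw [hfw, neg_eq_zero.1 hw, zero_dotProduct]
    rfl
  · rw [mulVec_neg, neg_neg, mulVec_transpose, ← dotProduct_mulVec, ← hfw]
    exact hfA _ ⟨x, hx, rfl⟩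

/-- Theorem of the alternative: exactly one of the two systems is solvable. -/
theorem stmt_7 {n m : ℕ} (K₁ : Set (Fin n → ℝ)) (K₂ : Set (Fin m → ℝ))
    (hK₁ : IsProperCone K₁) (hK₂ : IsProperCone K₂)
    (A : Matrix (Fin m) (Fin n) ℝ) :
    Xor' (∃ x ∈ K₁, A.mulVec x ∈ interior K₂)
      (∃ y ∈ dualCone K₂, y ≠ 0 ∧ -(Aᵀ.mulVec y) ∈ dualCone K₁) := by
  by_cases h : ∃ x ∈ K₁, A.mulVec x ∈ interior K₂
  · obtain ⟨x, hx, hAx⟩ := h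
    exact Or.inl ⟨⟨x, hx, hAx⟩, fun ⟨y, hy, hy0, hAy⟩ =>
      neg_transpose_mulVec_notMem_dualCone hx hAx hy hy0 hAy⟩
  · refine Or.inr ⟨exists_mem_dualCone_of_forall_mulVec_notMem_interior hK₁.convex
      hK₁.zero_mem (fun _ ht _ hx => hK₁.smul_mem ht hx) hK₂.convex hK₂.interior_nonempty
      (fun x hx hAx => h ⟨x, hx, hAx⟩), h⟩
end

section
/- Let $K \subseteq \mathbb{R}^n$ be a proper cone and let $S_1, S_2$ be real $n \times n$ matrices with $S_1(\mathbb{R}^n_+) \subseteq K$, $S_2(\mathbb{R}^n_+) \subseteq K$, $S_1$ mapping the interior of $\mathbb{R}^n_+$ into the interior of $K$, and $S_2$ invertible. If $B$ is $\mathbb{R}^n_+$-semipositive, then $S_1 B S_2^{-1}$ is $K$-semipositive. -/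
open Matrix Set

/-- The nonnegative orthant in `ℝ^n`. -/
def orthant (n : ℕ) : Set (Fin n → ℝ) := {x | ∀ i, 0 ≤ x i}

theorem stmt_12 {n : ℕ} (K : Set (Fin n → ℝ)) (hK : IsProperCone K)
    (S₁ S₂ B : Matrix (Fin n) (Fin n) ℝ)
    (hS₁ : ∀ x ∈ orthant n, S₁.mulVec x ∈ K)
    (hS₂ : ∀ x ∈ orthant n, S₂.mulVec x ∈ K)
    (hS₁int : ∀ x ∈ interior (orthant n), S₁.mulVec x ∈ interior K)
    (hS₂inv : IsUnit S₂.det)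
    (hB : ∃ x ∈ interior (orthant n), B.mulVec x ∈ interior (orthant n)) :
    ∃ y ∈ interior K, (S₁ * B * S₂⁻¹).mulVec y ∈ interior K := by
  obtain ⟨hadd, hsmul, hcl, hpt, hne⟩ := hK
  obtain ⟨x, hx, hBx⟩ := hB
  obtain ⟨v, hv⟩ := hne
  set A := S₁ * B * S₂⁻¹ with hA
  have hxK : x ∈ orthant n := interior_subset hx
  set w := S₁.mulVec (B.mulVec x) with hwdef
  have hw : w ∈ interior K := hS₁int _ hBx
  have hkey : ∀ t : ℝ, A.mulVec (t • v + S₂.mulVec x) = t • A.mulVec v + w := by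
    intro t
    rw [Matrix.mulVec_add, Matrix.mulVec_smul]
    congr 1
    rw [hA, Matrix.mulVec_mulVec, mul_assoc, Matrix.nonsing_inv_mul S₂ hS₂inv,
      mul_one, ← Matrix.mulVec_mulVec]
  have hmem_add : ∀ u ∈ interior K, ∀ k ∈ K, u + k ∈ interior K := by
    intro u hu k hk
    have hopen : IsOpen ((fun z : Fin n → ℝ => z - k) ⁻¹' interior K) :=
      isOpen_interior.preimage (by continuity)
    have hsub : ((fun z : Fin n → ℝ => z - k) ⁻¹' interior K) ⊆ K := by
      intro z hz
      have h1 : z - k ∈ K := interior_subset hz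
      have := hadd _ h1 k hk
      simpa using this
    refine interior_maximal hsub hopen ?_
    simp [Set.mem_preimage, hu]
  have hsmul_int : ∀ t : ℝ, 0 < t → ∀ u ∈ interior K, t • u ∈ interior K := by
    intro t ht u hu
    have hopen : IsOpen ((fun z : Fin n → ℝ => t⁻¹ • z) ⁻¹' interior K) :=
      isOpen_interior.preimage (continuous_const_smul _)
    have hsub : ((fun z : Fin n → ℝ => t⁻¹ • z) ⁻¹' interior K) ⊆ K := by
      intro z hz
      have h1 : t⁻¹ • z ∈ K := interior_subset hz
      have := hsmul t ht.le _ h1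
      simpa [smul_smul, mul_inv_cancel₀ ht.ne'] using this
    refine interior_maximal hsub hopen ?_
    simpa [Set.mem_preimage, smul_smul, inv_mul_cancel₀ ht.ne'] using hu
  obtain ⟨ε, hε, hball⟩ := Metric.isOpen_iff.mp isOpen_interior w hw
  set c := ‖A.mulVec v‖ + 1 with hc_def
  have hc : 0 < c := by positivity
  set t := ε / (2 * c) with ht_def
  have ht : 0 < t := by positivity
  refine ⟨t • v + S₂.mulVec x, ?_, ?_⟩
  · exact hmem_add _ (hsmul_int t ht v hv) _ (hS₂ x hxK)
  · rw [hkey]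
    apply hball
    rw [Metric.mem_ball, dist_eq_norm]
    have heq : t • A.mulVec v + w - w = t • A.mulVec v := by abel
    rw [heq, norm_smul, Real.norm_eq_abs, abs_of_pos ht]
    have h1 : ‖A.mulVec v‖ ≤ c := by simp [hc_def]
    have h2 : t * c = ε / 2 := by
      rw [ht_def]; field_simp
    calc t * ‖A.mulVec v‖ ≤ t * c := by nlinarith
      _ = ε / 2 := h2
      _ < ε := by linarith
end

section
/- For any proper cone $K \subseteq \mathbb{R}^n$, the set $S(K)$ of $K$-semipositive matrices contains a basis of the real vector space $M_n(\mathbb{R})$ of $n \times n$ real matrices, i.e. there exist $n^2$ linearly independent $K$-semipositive matrices. -/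
open Matrix Set

/-!
For `x` in the interior of `K`, the matrices `A` with `A *ᵥ x ∈ interior K` form an open set of
`K`-semipositive matrices containing the identity. A set with nonempty interior in a
finite-dimensional space spans it, so it contains a basis.
-/

open Module Submodule in
theorem exists_linearIndependent_forall_mem_of_nonempty_interior
    {𝕜 V : Type*} [NontriviallyNormedField 𝕜] [AddCommGroup V] [Module 𝕜 V] [TopologicalSpace V]
    [ContinuousAdd V] [ContinuousSMul 𝕜 V] [FiniteDimensional 𝕜 V]
    {s : Set V} (hs : (interior s).Nonempty) :
    ∃ b : Fin (finrank 𝕜 V) → V, LinearIndependent 𝕜 b ∧ ∀ i, b i ∈ s := by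
  have hspan : ⊤ ≤ span 𝕜 s :=
    ((span 𝕜 s).eq_top_of_nonempty_interior' (hs.mono (interior_mono subset_span))).ge
  let B := Basis.ofSpan hspan
  let B' := B.reindex (B.indexEquiv (finBasis 𝕜 V))
  refine ⟨B', B'.linearIndependent, fun i => Basis.ofSpan_subset hspan ?_⟩
  rw [← B.range_reindex (B.indexEquiv (finBasis 𝕜 V))]
  exact mem_range_self i

theorem isOpen_setOf_mulVec_mem {m n R : Type*} [Fintype n] [TopologicalSpace R]
    [NonUnitalNonAssocSemiring R] [IsTopologicalSemiring R] {U : Set (m → R)} (hU : IsOpen U)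
    (x : n → R) : IsOpen {A : Matrix m n R | A *ᵥ x ∈ U} :=
  hU.preimage (continuous_id.matrix_mulVec continuous_const)

theorem nonempty_interior_setOf_semipositive {n : ℕ} {K : Set (Fin n → ℝ)}
    (hK : (interior K).Nonempty) : (interior {A | Semipositive K A}).Nonempty := by
  obtain ⟨x, hx⟩ := hK
  have hsub : {A : Matrix (Fin n) (Fin n) ℝ | A *ᵥ x ∈ interior K} ⊆ {A | Semipositive K A} :=
    fun A hA => ⟨x, hx, hA⟩
  exact ⟨1, interior_maximal hsub (isOpen_setOf_mulVec_mem isOpen_interior x) (by simpa using hx)⟩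

/-- `S(K)` contains a basis of `Mₙ(ℝ)`: there are `n²` linearly independent
`K`-semipositive matrices. -/
theorem stmt_13 {n : ℕ} (K : Set (Fin n → ℝ)) (hK : IsProperCone K) :
    ∃ b : Fin (n ^ 2) → Matrix (Fin n) (Fin n) ℝ,
      LinearIndependent ℝ b ∧ ∀ i, Semipositive K (b i) := by
  obtain ⟨b, hli, hb⟩ := exists_linearIndependent_forall_mem_of_nonempty_interior (𝕜 := ℝ)
    (nonempty_interior_setOf_semipositive hK.2.2.2.2)
  have hdim : n ^ 2 = Module.finrank ℝ (Matrix (Fin n) (Fin n) ℝ) := by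
    simp [Module.finrank_matrix, sq]
  exact ⟨b ∘ finCongr hdim, hli.comp _ (finCongr hdim).injective, fun i => hb _⟩
end

section
/- Let $K \subseteq \mathbb{R}^n$ be a proper cone and let $L : M_n(\mathbb{R}) \to M_n(\mathbb{R})$ be a linear map that strongly preserves the set $S(K)$ of $K$-semipositive matrices, i.e. $L(S(K)) = S(K)$ and $L$ is invertible with $L^{-1}(S(K)) \subseteq S(K)$. Then $L$ is a linear automorphism of $\pi(K)$, i.e. $L(\pi(K)) = \pi(K)$. -/
open Matrix Set

/-- The set `S(K)` of `K`-semipositive matrices. -/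
def semipositiveSet {n : ℕ} (K : Set (Fin n → ℝ)) : Set (Matrix (Fin n) (Fin n) ℝ) :=
  {A | ∃ x ∈ interior K, A.mulVec x ∈ interior K}

/-- The set `π(K)` of `K`-nonnegative matrices. -/
def nonnegativeSet {n : ℕ} (K : Set (Fin n → ℝ)) : Set (Matrix (Fin n) (Fin n) ℝ) :=
  {A | ∀ x ∈ K, A.mulVec x ∈ K}

open Pointwise

lemma aux_small {φ : ℝ → ℝ} (hφ : Continuous φ) (h0 : φ 0 < 0) :
    ∃ t : ℝ, 0 < t ∧ t < 1 ∧ φ t < 0 := by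
  have hnh := hφ.continuousAt (x := (0:ℝ)) |>.preimage_mem_nhds
    ((isOpen_Iio (a := (0:ℝ))).mem_nhds h0)
  obtain ⟨ε, hε, hsub⟩ := Metric.mem_nhds_iff.mp hnh
  refine ⟨min (ε/2) (1/2), by positivity, ?_, hsub ?_⟩
  · calc min (ε/2) (1/2) ≤ 1/2 := min_le_right _ _
      _ < 1 := by norm_num
  · simp only [Metric.mem_ball, Real.dist_eq, sub_zero]
    rw [abs_of_pos (by positivity)]
    calc min (ε/2) (1/2) ≤ ε/2 := min_le_left _ _
      _ < ε := by linarith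

lemma aux_line {n : ℕ} {K : Set (Fin n → ℝ)} {x : Fin n → ℝ} (hx : x ∈ interior K)
    (v : Fin n → ℝ) : ∃ t : ℝ, 0 < t ∧ x + t • v ∈ K := by
  have hc : Continuous (fun t : ℝ => x + t • v) := by continuity
  have h0 : (fun t : ℝ => x + t • v) 0 ∈ interior K := by simpa using hx
  have hnh := hc.continuousAt (x := (0:ℝ)) |>.preimage_mem_nhds
    (isOpen_interior.mem_nhds h0)
  obtain ⟨ε, hε, hsub⟩ := Metric.mem_nhds_iff.mp hnh
  refine ⟨ε/2, by positivity, interior_subset (hsub ?_)⟩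
  simp only [Metric.mem_ball, Real.dist_eq, sub_zero]
  rw [abs_of_pos (by positivity)]; linarith

lemma aux_add_interior {n : ℕ} {K : Set (Fin n → ℝ)} (hK : IsProperCone K)
    {a b : Fin n → ℝ} (ha : a ∈ K) (hb : b ∈ interior K) : a + b ∈ interior K := by
  have hopen : IsOpen ((fun y => a + y) '' interior K) :=
    (Homeomorph.addLeft a).isOpenMap _ isOpen_interior
  have hsub : (fun y => a + y) '' interior K ⊆ K := by
    rintro _ ⟨y, hy, rfl⟩
    exact hK.1 a ha y (interior_subset hy)
  exact interior_maximal hsub hopen ⟨b, hb, rfl⟩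

lemma aux_mulVec_cont {n : ℕ} (A : Matrix (Fin n) (Fin n) ℝ) :
    Continuous fun z : Fin n → ℝ => A.mulVec z :=
  A.mulVecLin.continuous_of_finiteDimensional

lemma aux_char {n : ℕ} {K : Set (Fin n → ℝ)} (hK : IsProperCone K)
    (A : Matrix (Fin n) (Fin n) ℝ) :
    A ∈ nonnegativeSet K ↔ ∀ B ∈ semipositiveSet K, A + B ∈ semipositiveSet K := by
  constructor
  · rintro hA B ⟨x, hx, hBx⟩
    refine ⟨x, hx, ?_⟩
    rw [Matrix.add_mulVec]
    exact aux_add_interior hK (hA x (interior_subset hx)) hBx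
  · intro h
    by_contra hA
    simp only [nonnegativeSet, mem_setOf_eq, not_forall] at hA
    obtain ⟨x₀, hx₀, hAx₀⟩ := hA
    have h0K : (0 : Fin n → ℝ) ∈ K := by
      have : (0 : Fin n → ℝ) ∈ K ∩ (-K) := by rw [hK.2.2.2.1]; rfl
      exact this.1
    have hconv : Convex ℝ K := by
      intro x hx y hy a b ha hb hab
      exact hK.1 _ (hK.2.1 a ha x hx) _ (hK.2.1 b hb y hy)
    obtain ⟨f, u, hfK, hfA⟩ :=
      geometric_hahn_banach_closed_point hconv hK.2.2.1 hAx₀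
    set g : (Fin n → ℝ) →L[ℝ] ℝ := -f with hg
    have hupos : 0 < u := by have := hfK 0 h0K; simpa using this
    have hgK : ∀ b ∈ K, 0 ≤ g b := by
      intro b hb
      by_contra hneg
      push_neg at hneg
      have hgb : 0 < f b := by
        simp only [hg, ContinuousLinearMap.neg_apply] at hneg; linarith
      have ht : ((u+1)/(f b)) • b ∈ K := hK.2.1 _ (by positivity) b hb
      have := hfK _ ht
      rw [f.map_smul, smul_eq_mul, div_mul_cancel₀ _ (ne_of_gt hgb)] at this
      linarith
    have hgA : g (A.mulVec x₀) < 0 := by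
      simp only [hg, ContinuousLinearMap.neg_apply, neg_lt, neg_zero]
      linarith
    have hgpos : ∀ z ∈ interior K, 0 < g z := by
      intro z hz
      obtain ⟨t, ht, htm⟩ := aux_line hz (A.mulVec x₀)
      have := hgK _ htm
      rw [map_add, g.map_smul, smul_eq_mul] at this
      nlinarith
    obtain ⟨y₀, hy₀⟩ := hK.2.2.2.2
    have hgy₀ : 0 < g y₀ := hgpos y₀ hy₀
    -- find interior point x₁ with g (A x₁) < 0
    obtain ⟨x₁, hx₁, hgAx₁⟩ : ∃ x₁ ∈ interior K, g (A.mulVec x₁) < 0 := by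
      have hφ : Continuous fun t : ℝ => g (A.mulVec ((1-t) • x₀ + t • y₀)) := by
        refine g.continuous.comp ((aux_mulVec_cont A).comp ?_)
        continuity
      obtain ⟨t, ht0, ht1, hφt⟩ := aux_small hφ (by simpa using hgA)
      exact ⟨(1-t) • x₀ + t • y₀,
        hconv.combo_closure_interior_mem_interior (subset_closure hx₀) hy₀
          (by linarith) ht0 (by ring), hφt⟩
    have hgx₁ : 0 < g x₁ := hgpos x₁ hx₁
    obtain ⟨ε, hεpos, hεlt⟩ : ∃ ε : ℝ, 0 < ε ∧ g (A.mulVec x₁) + ε * g y₀ < 0 := by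
      refine ⟨(-g (A.mulVec x₁)) / (2 * g y₀), div_pos (by linarith) (by linarith), ?_⟩
      rw [div_mul_eq_mul_div, mul_comm (2 : ℝ) (g y₀), ← div_div,
        mul_div_assoc, div_self (ne_of_gt hgy₀)]
      linarith
    have hεy : ε • y₀ ∈ interior K := by
      have h1 : ε • y₀ ∈ ε • interior K := smul_mem_smul_set hy₀
      rw [← interior_smul₀ (ne_of_gt hεpos)] at h1
      exact interior_mono (fun z hz => by
        obtain ⟨w', hw', hwz⟩ := hz
        exact hwz ▸ hK.2.1 ε hεpos.le w' hw') h1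
    obtain ⟨w, hww, hgw⟩ : ∃ w : Fin n → ℝ,
        g x₁ • w = A.mulVec x₁ + ε • y₀ ∧ g w < 0 := by
      refine ⟨(g x₁)⁻¹ • (A.mulVec x₁ + ε • y₀), ?_, ?_⟩
      · rw [smul_smul, mul_inv_cancel₀ (ne_of_gt hgx₁), one_smul]
      · have heq : g ((g x₁)⁻¹ • (A.mulVec x₁ + ε • y₀))
            = (g x₁)⁻¹ * (g (A.mulVec x₁) + ε * g y₀) := by
          rw [g.map_smul, map_add, g.map_smul]
          simp [smul_eq_mul]
        rw [heq]
        exact mul_neg_of_pos_of_neg (inv_pos.mpr hgx₁) hεlt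
    obtain ⟨C, hCmul⟩ : ∃ C : Matrix (Fin n) (Fin n) ℝ,
        ∀ z : Fin n → ℝ, C.mulVec z = g z • w := by
      refine ⟨Matrix.of fun i j => w i * g (Pi.single j 1), fun z => ?_⟩
      have hgz : g z = ∑ j, z j * g (Pi.single j 1) := by
        conv_lhs => rw [show z = ∑ j, Pi.single j (z j) from
          (Finset.univ_sum_single z).symm]
        rw [map_sum]
        refine Finset.sum_congr rfl fun j _ => ?_
        rw [show (Pi.single j (z j) : Fin n → ℝ) = z j • (Pi.single j 1 : Fin n → ℝ) by
          rw [← Pi.single_smul, smul_eq_mul, mul_one], g.map_smul, smul_eq_mul]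
      funext i
      simp only [Matrix.mulVec, dotProduct, Matrix.of_apply, Pi.smul_apply,
        smul_eq_mul, hgz, Finset.sum_mul]
      exact Finset.sum_congr rfl fun j _ => by ring
    have hB : C - A ∈ semipositiveSet K := by
      refine ⟨x₁, hx₁, ?_⟩
      rw [Matrix.sub_mulVec, hCmul, hww, add_sub_cancel_left]
      exact hεy
    obtain ⟨z, hz, hCz⟩ := h _ hB
    rw [show A + (C - A) = C by abel, hCmul] at hCz
    have h1 : 0 ≤ g (g z • w) := hgK _ (interior_subset hCz)
    rw [g.map_smul, smul_eq_mul] at h1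
    have hgzpos := hgpos z hz
    nlinarith

theorem stmt_14 {n : ℕ} (K : Set (Fin n → ℝ)) (hK : IsProperCone K)
    (L : Matrix (Fin n) (Fin n) ℝ ≃ₗ[ℝ] Matrix (Fin n) (Fin n) ℝ)
    (hL : L '' semipositiveSet K = semipositiveSet K)
    (hL' : L.symm '' semipositiveSet K ⊆ semipositiveSet K) :
    L '' nonnegativeSet K = nonnegativeSet K := by
  ext M
  constructor
  · rintro ⟨A, hA, rfl⟩
    rw [aux_char hK] at hA ⊢
    intro B hB
    have hB' : L.symm B ∈ semipositiveSet K := by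
      rw [← hL] at hB
      obtain ⟨b, hb, rfl⟩ := hB
      simpa using hb
    have hm : A + L.symm B ∈ semipositiveSet K := hA _ hB'
    have hmem : L (A + L.symm B) ∈ semipositiveSet K := by
      rw [← hL]; exact ⟨_, hm, rfl⟩
    rwa [map_add, L.apply_symm_apply] at hmem
  · intro hM
    refine ⟨L.symm M, ?_, by simp⟩
    rw [aux_char hK] at hM ⊢
    intro B hB
    have hLB : L B ∈ semipositiveSet K := by rw [← hL]; exact ⟨_, hB, rfl⟩
    have hm : M + L B ∈ semipositiveSet K := hM _ hLB
    have hmem : L.symm (M + L B) ∈ semipositiveSet K := hL' ⟨_, hm, rfl⟩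
    rwa [map_add, L.symm_apply_apply] at hmem
end

section
/- Let $K \subseteq \mathbb{R}^n$ be a proper cone, let $A$ be a $K$-semipositive real $n \times n$ matrix, and let $\mathcal{K}_A = \{x \in K : Ax \in K\}$ be its semipositive cone. If for some integer $j \ge 2$ both $A^j$ and $A^{j+1}$ map the interior of $\mathcal{K}_A$ onto itself, then $A(\mathcal{K}_A) \subseteq \mathcal{K}_A$. -/
open Matrix Set

/-- The semipositive cone `𝒦_A = {x ∈ K : Ax ∈ K}` of `A`. -/
def semipositiveCone {n : ℕ} (K : Set (Fin n → ℝ))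
    (A : Matrix (Fin n) (Fin n) ℝ) : Set (Fin n → ℝ) :=
  {x | x ∈ K ∧ A.mulVec x ∈ K}

theorem stmt_15 {n : ℕ} (K : Set (Fin n → ℝ)) (hK : IsProperCone K)
    (A : Matrix (Fin n) (Fin n) ℝ)
    (hA : ∃ x ∈ interior K, A.mulVec x ∈ interior K)
    (j : ℕ) (hj : 2 ≤ j)
    (hj₁ : (A ^ j).mulVec '' interior (semipositiveCone K A)
            = interior (semipositiveCone K A))
    (hj₂ : (A ^ (j + 1)).mulVec '' interior (semipositiveCone K A)
            = interior (semipositiveCone K A)) :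
    ∀ x ∈ semipositiveCone K A, A.mulVec x ∈ semipositiveCone K A := by
  obtain ⟨hadd, hsmul, hclosed, hpointed, hintK⟩ := hK
  set 𝒦 := semipositiveCone K A with h𝒦
  have hset : 𝒦 = K ∩ A.mulVec ⁻¹' K := rfl
  have hcont : Continuous (A.mulVec) := by
    exact (Matrix.mulVecLin A).continuous_of_finiteDimensional
  have hKconv : Convex ℝ K := by
    intro x hx y hy a b ha hb hab
    exact hadd _ (hsmul a ha x hx) _ (hsmul b hb y hy)
  have h𝒦conv : Convex ℝ 𝒦 := by
    rw [hset]
    exact hKconv.inter (hKconv.linear_preimage A.mulVecLin)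
  have h𝒦closed : IsClosed 𝒦 := by
    rw [hset]
    exact hclosed.inter (hclosed.preimage hcont)
  -- interior of 𝒦 is nonempty
  obtain ⟨x₀, hx₀, hAx₀⟩ := hA
  have hx₀int : x₀ ∈ interior 𝒦 := by
    have hopen : IsOpen (interior K ∩ A.mulVec ⁻¹' interior K) :=
      isOpen_interior.inter (isOpen_interior.preimage hcont)
    have hsub : interior K ∩ A.mulVec ⁻¹' interior K ⊆ 𝒦 := by
      rintro y ⟨hy, hAy⟩
      exact ⟨interior_subset hy, interior_subset hAy⟩
    exact interior_maximal hsub hopen ⟨hx₀, hAx₀⟩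
  -- A maps interior 𝒦 onto interior 𝒦
  have key : A.mulVec '' interior 𝒦 = interior 𝒦 := by
    have h1 : (A ^ (j + 1)).mulVec '' interior 𝒦
        = A.mulVec '' ((A ^ j).mulVec '' interior 𝒦) := by
      rw [← image_comp]
      apply image_congr
      intro y _
      simp [pow_succ', Matrix.mulVec_mulVec]
    rw [h1, hj₁] at hj₂
    exact hj₂
  intro x hx
  have hx' : x ∈ closure (interior 𝒦) := by
    haveI : (nhdsWithin (0 : ℝ) (Ioc (0 : ℝ) 1)).NeBot := by
      refine mem_closure_iff_nhdsWithin_neBot.mp ?_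
      rw [closure_Ioc (one_ne_zero (α := ℝ)).symm]
      exact ⟨le_refl 0, zero_le_one⟩
    have hcont' : Continuous fun t : ℝ => x + t • (x₀ - x) :=
      continuous_const.add (continuous_id.smul continuous_const)
    have htend : Filter.Tendsto (fun t : ℝ => x + t • (x₀ - x))
        (nhdsWithin 0 (Ioc (0 : ℝ) 1)) (nhds x) := by
      have h0 : Filter.Tendsto (fun t : ℝ => x + t • (x₀ - x)) (nhds 0)
          (nhds (x + (0 : ℝ) • (x₀ - x))) := hcont'.tendsto 0
      simpa using h0.mono_left nhdsWithin_le_nhds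
    refine mem_closure_of_tendsto htend ?_
    filter_upwards [self_mem_nhdsWithin] with t ht
    exact h𝒦conv.add_smul_sub_mem_interior hx hx₀int ht
  have hclos : closure (interior 𝒦) ⊆ 𝒦 := by
    calc closure (interior 𝒦) ⊆ closure 𝒦 := closure_mono interior_subset
      _ = 𝒦 := h𝒦closed.closure_eq
  have : A.mulVec x ∈ closure (A.mulVec '' interior 𝒦) :=
    image_closure_subset_closure_image (f := A.mulVec) hcont
      (mem_image_of_mem _ hx')
  rw [key] at this
  exact hclos this
end

section
/- Let $K \subseteq \mathbb{R}^n$ be a proper cone and let $A$ be a $K$-semipositive real $n \times n$ matrix. Then the semipositive cone $\mathcal{K}_A = \{x \in K : Ax \in K\}$ is a proper cone in $\mathbb{R}^n$, i.e. it is a closed pointed convex cone with nonempty interior. -/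
open Matrix Set

theorem stmt_16 {n : ℕ} (K : Set (Fin n → ℝ)) (hK : IsProperCone K)
    (A : Matrix (Fin n) (Fin n) ℝ)
    (hA : ∃ x ∈ interior K, A.mulVec x ∈ interior K) :
    IsProperCone (semipositiveCone K A) := by
  obtain ⟨hadd, hsmul, hclosed, hpointed, hint⟩ := hK
  have hcont : Continuous fun x : Fin n → ℝ => A.mulVec x :=
    A.mulVecLin.continuous_of_finiteDimensional
  have h0K : (0 : Fin n → ℝ) ∈ K := by
    have := Set.mem_singleton (0 : Fin n → ℝ)
    rw [← hpointed] at this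
    exact this.1
  refine ⟨?_, ?_, ?_, ?_, ?_⟩
  · rintro x ⟨hx1, hx2⟩ y ⟨hy1, hy2⟩
    refine ⟨hadd x hx1 y hy1, ?_⟩
    rw [Matrix.mulVec_add]
    exact hadd _ hx2 _ hy2
  · rintro a ha x ⟨hx1, hx2⟩
    refine ⟨hsmul a ha x hx1, ?_⟩
    rw [Matrix.mulVec_smul]
    exact hsmul a ha _ hx2
  · exact hclosed.inter (hclosed.preimage hcont)
  · apply Set.eq_singleton_iff_unique_mem.mpr
    constructor
    · constructor
      · exact ⟨h0K, by rw [Matrix.mulVec_zero]; exact h0K⟩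
      · refine Set.mem_neg.mpr ?_
        simp only [neg_zero]
        exact ⟨h0K, by rw [Matrix.mulVec_zero]; exact h0K⟩
    · rintro x ⟨⟨hx1, _⟩, hxn⟩
      have hxn' : -x ∈ K := (Set.mem_neg.mp hxn).1
      have : x ∈ K ∩ (-K) := ⟨hx1, Set.mem_neg.mpr (by simpa using hxn')⟩
      rw [hpointed] at this
      exact this
  · obtain ⟨x, hx1, hx2⟩ := hA
    refine ⟨x, ?_⟩
    have hopen : IsOpen (interior K ∩ (fun y => A.mulVec y) ⁻¹' interior K) :=
      isOpen_interior.inter (isOpen_interior.preimage hcont)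
    have hsub : interior K ∩ (fun y => A.mulVec y) ⁻¹' interior K ⊆ semipositiveCone K A := by
      rintro y ⟨hy1, hy2⟩
      exact ⟨interior_subset hy1, interior_subset hy2⟩
    exact interior_maximal hsub hopen ⟨hx1, hx2⟩
end
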